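/- Let A be an n×n real matrix with ⊞-determinant |A|_∞ ≠ 0 and let b ∈ ℝ^n. Then there exists p₀ such that for all p ≥ p₀ the entrywise (2p+1)-power matrix Φ_p(A) is invertible, the system Φ_p(A)·φ_p(x) = φ_p(b) has the unique solution x^{(p)} with x^{(p)}_i = (|Φ_p(A^{(i)})| / |Φ_p(A)|)^{1/(2p+1)} (real odd root), where A^{(i)} is A with column i replaced by b; and lim_{p→∞} x^{(p)}_i = |A^{(i)}|_∞ / |A|_∞ for every i. -/

import Mathlib

open scoped Classical

/-- ξ_I[x](α): signed count of occurrences of α among the x i, i ∈ I. -/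
noncomputable def xiF {ι : Type*} (I : Finset ι) (x : ι → ℝ) (α : ℝ) : ℤ :=
  ((I.filter fun i => x i = α).card : ℤ) - ((I.filter fun i => x i = -α).card : ℤ)

/-- the n-ary limit operation F_I, i.e. ⊞_{i∈I} x_i. -/
noncomputable def FF {ι : Type*} (I : Finset ι) (x : ι → ℝ) : ℝ :=
  if h : (I.filter fun j => xiF I x (x j) ≠ 0).Nonempty then
    if 0 < xiF I x ((I.filter fun j => xiF I x (x j) ≠ 0).sup' h fun i => |x i|) then
      (I.filter fun j => xiF I x (x j) ≠ 0).sup' h x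
    else if xiF I x ((I.filter fun j => xiF I x (x j) ≠ 0).sup' h fun i => |x i|) < 0 then
      (I.filter fun j => xiF I x (x j) ≠ 0).inf' h x
    else 0
  else 0

/-- determinant in limit -/
noncomputable def detInf {n : ℕ} (A : Matrix (Fin n) (Fin n) ℝ) : ℝ :=
  FF Finset.univ fun σ : Equiv.Perm (Fin n) =>
    ((Equiv.Perm.sign σ : ℤ) : ℝ) * ∏ i, A i (σ i)

/-- the unique real (2p+1)-th root -/
noncomputable def oddRoot (p : ℕ) (t : ℝ) : ℝ :=
  if 0 ≤ t then t ^ ((2 * (p : ℝ) + 1)⁻¹) else -((-t) ^ ((2 * (p : ℝ) + 1)⁻¹))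

/-- entrywise (2p+1)-th power of a vector -/
noncomputable def phiV (p : ℕ) {n : ℕ} (x : Fin n → ℝ) : Fin n → ℝ :=
  fun i => x i ^ (2 * p + 1)

/-- entrywise (2p+1)-th Hadamard power of a matrix -/
noncomputable def PhiM (p : ℕ) {n : ℕ} (A : Matrix (Fin n) (Fin n) ℝ) :
    Matrix (Fin n) (Fin n) ℝ :=
  Matrix.of fun i j => A i j ^ (2 * p + 1)


/-!
Grouping the terms of an odd power sum `∑ xᵢ ^ (2p+1)` by modulus gives `∑ ξ(α) α ^ (2p+1)` over
the moduli `α`, where `ξ(α)` counts the occurrences of `α` minus those of `-α`. The limit value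
`F = FF I x` is the value of largest modulus with `ξ(F) > 0`, so that
`∑ xᵢ ^ (2p+1) / F ^ (2p+1) → ξ(F) > 0`. By the permutation expansion
`det Φ_p(B) = ∑_σ (sgn σ ∏ᵢ B i (σ i)) ^ (2p+1)` this applies to determinants: `det Φ_p(A)` is
eventually nonzero, so Cramer's rule for `Φ_p(A)` followed by the odd root solves the system
uniquely, and `det Φ_p(A⁽ⁱ⁾) / det Φ_p(A)` is `(|A⁽ⁱ⁾|_∞ / |A|_∞) ^ (2p+1)` times a factor tending
to a positive constant, whose `(2p+1)`-th root tends to `1`.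
-/

open Filter Topology
open scoped Matrix

lemma oddRoot_pow (p : ℕ) (t : ℝ) : oddRoot p t ^ (2 * p + 1) = t := by
  have hc : 2 * (p : ℝ) + 1 = ((2 * p + 1 : ℕ) : ℝ) := by push_cast; ring
  unfold oddRoot
  split_ifs with h
  · rw [hc, Real.rpow_inv_natCast_pow h (by omega)]
  · rw [Odd.neg_pow ⟨p, rfl⟩, hc, Real.rpow_inv_natCast_pow (by linarith) (by omega), neg_neg]

lemma pow_eq_iff_eq_oddRoot (p : ℕ) (x t : ℝ) : x ^ (2 * p + 1) = t ↔ x = oddRoot p t := by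
  conv_lhs => rw [← oddRoot_pow p t]
  exact (Odd.strictMono_pow (R := ℝ) ⟨p, rfl⟩).injective.eq_iff

lemma oddRoot_pow_self (p : ℕ) (x : ℝ) : oddRoot p (x ^ (2 * p + 1)) = x :=
  ((pow_eq_iff_eq_oddRoot p x _).mp rfl).symm

lemma oddRoot_zero (p : ℕ) : oddRoot p 0 = 0 := by
  simpa using oddRoot_pow_self p 0

lemma oddRoot_mul (p : ℕ) (s t : ℝ) : oddRoot p (s * t) = oddRoot p s * oddRoot p t := by
  rw [eq_comm, ← pow_eq_iff_eq_oddRoot, mul_pow, oddRoot_pow, oddRoot_pow]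

lemma tendsto_oddRoot_of_tendsto_pos {r : ℕ → ℝ} {L : ℝ} (hr : Tendsto r atTop (𝓝 L))
    (hL : 0 < L) : Tendsto (fun p => oddRoot p (r p)) atTop (𝓝 1) := by
  have hexp : Tendsto (fun p : ℕ => (2 * (p : ℝ) + 1)⁻¹) atTop (𝓝 0) :=
    tendsto_inv_atTop_zero.comp <| tendsto_atTop_add_const_right _ _ <|
      (tendsto_natCast_atTop_atTop (R := ℝ)).const_mul_atTop two_pos
  have hrpow := hr.rpow hexp (Or.inl hL.ne')
  rw [Real.rpow_zero] at hrpow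
  refine hrpow.congr' ?_
  filter_upwards [hr.eventually (eventually_gt_nhds hL)] with p hp
  rw [oddRoot, if_pos hp.le]

lemma Matrix.mulVec_eq_iff_eq_updateCol_det_div {K ι : Type*} [Field K] [Fintype ι]
    [DecidableEq ι] {M : Matrix ι ι K} (hM : M.det ≠ 0) (v c : ι → K) :
    M *ᵥ v = c ↔ v = fun i => (M.updateCol i c).det / M.det := by
  have hsol : M *ᵥ (fun i => (M.updateCol i c).det / M.det) = c := by
    have : (fun i => (M.updateCol i c).det / M.det) = M.det⁻¹ • M.cramer c := by
      ext i
      rw [Pi.smul_apply, Matrix.cramer_apply, smul_eq_mul, div_eq_inv_mul]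
    rw [this, Matrix.mulVec_smul, Matrix.mulVec_cramer, inv_smul_smul₀ hM]
  have hinj : Function.Injective M.mulVec :=
    Matrix.mulVec_injective_iff_isUnit.mpr ((M.isUnit_iff_isUnit_det).mpr hM.isUnit)
  conv_lhs => rw [← hsol]
  exact hinj.eq_iff

lemma PhiM_updateCol (p : ℕ) {n : ℕ} (A : Matrix (Fin n) (Fin n) ℝ) (b : Fin n → ℝ)
    (i : Fin n) : PhiM p (A.updateCol i b) = (PhiM p A).updateCol i (phiV p b) := by
  ext j k
  by_cases h : k = i <;> simp [PhiM, phiV, Matrix.updateCol_apply, h]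

lemma PhiM_mulVec_phiV_eq_iff (p : ℕ) {n : ℕ} {A : Matrix (Fin n) (Fin n) ℝ}
    (hA : (PhiM p A).det ≠ 0) (b y : Fin n → ℝ) :
    (PhiM p A).mulVec (phiV p y) = phiV p b ↔
      y = fun i => oddRoot p ((PhiM p (A.updateCol i b)).det / (PhiM p A).det) := by
  rw [Matrix.mulVec_eq_iff_eq_updateCol_det_div hA]
  simp only [PhiM_updateCol, funext_iff, phiV, pow_eq_iff_eq_oddRoot]

section xiF

variable {ι : Type*} (I : Finset ι) (x : ι → ℝ)

lemma xiF_neg (α : ℝ) : xiF I x (-α) = -xiF I x α := by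
  simp [xiF]

lemma xiF_zero : xiF I x 0 = 0 := by
  simp [xiF]

lemma xiF_abs_ne_zero_iff (a : ℝ) : xiF I x |a| ≠ 0 ↔ xiF I x a ≠ 0 := by
  rcases abs_choice a with h | h <;> simp [h, xiF_neg]

variable {I x}

lemma exists_eq_of_xiF_pos {α : ℝ} (h : 0 < xiF I x α) : ∃ i ∈ I, x i = α := by
  have : 0 < (I.filter fun i => x i = α).card := by
    unfold xiF at h
    omega
  obtain ⟨i, hi⟩ := Finset.card_pos.mp this
  exact ⟨i, Finset.mem_filter.mp hi⟩

variable (I x)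

lemma sum_filter_abs_eq_xiF_mul_pow {k : ℕ} (hk : Odd k) {α : ℝ} (hα : 0 ≤ α) :
    ∑ i ∈ I with |x i| = α, x i ^ k = xiF I x α * α ^ k := by
  have hk0 : k ≠ 0 := by rintro rfl; simp at hk
  push_cast [xiF, Finset.natCast_card_filter]
  rw [sub_mul, Finset.sum_mul, Finset.sum_mul, ← Finset.sum_sub_distrib, Finset.sum_filter]
  refine Finset.sum_congr rfl fun i _ => ?_
  by_cases hpos : x i = α <;> by_cases hneg : x i = -α
  · have : α = 0 := by linarith
    simp [hpos, this, hk0]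
  · rw [hpos] at hneg ⊢
    simp [abs_of_nonneg hα, hneg]
  · rw [hneg] at hpos ⊢
    simp [abs_of_nonneg hα, hpos, hk.neg_pow]
  · simp [abs_eq hα, hpos, hneg]

lemma sum_odd_pow_eq_sum_xiF_mul_pow {k : ℕ} (hk : Odd k) :
    ∑ i ∈ I, x i ^ k = ∑ α ∈ I.image (|x ·|), xiF I x α * α ^ k := by
  rw [← Finset.sum_fiberwise_of_maps_to (g := (|x ·|))
    fun i hi => Finset.mem_image_of_mem (|x ·|) hi]
  refine Finset.sum_congr rfl fun α hα => ?_
  obtain ⟨i, -, rfl⟩ := Finset.mem_image.mp hα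
  exact sum_filter_abs_eq_xiF_mul_pow I x hk (abs_nonneg _)

end xiF

lemma tendsto_sum_mul_div_pow_of_dominant {T : Finset ℝ} (c : ℝ → ℝ) {M : ℝ} (hMT : M ∈ T)
    (hM : M ≠ 0) (hdom : ∀ α ∈ T, c α ≠ 0 → α ≠ M → |α| < |M|) :
    Tendsto (fun k : ℕ => ∑ α ∈ T, c α * (α / M) ^ k) atTop (𝓝 (c M)) := by
  have hlim : ∑ α ∈ T, (if M = α then c α else 0) = c M := by
    rw [Finset.sum_ite_eq, if_pos hMT]
  rw [← hlim]
  refine tendsto_finsetSum T fun α hα => ?_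
  by_cases hαM : α = M
  · simp [hαM, hM]
  by_cases hc : c α = 0
  · simp [hc]
  have hlt : |α / M| < 1 := by
    rw [abs_div, div_lt_one (abs_pos.mpr hM)]
    exact hdom α hα hc hαM
  simpa [Ne.symm hαM] using (tendsto_pow_atTop_nhds_zero_of_abs_lt_one hlt).const_mul (c α)

section FF

variable {ι : Type*} (I : Finset ι) (x : ι → ℝ)

noncomputable def xiSupport : Finset ι := I.filter fun j => xiF I x (x j) ≠ 0

variable {I x}

lemma mem_xiSupport {j : ι} : j ∈ xiSupport I x ↔ j ∈ I ∧ xiF I x (x j) ≠ 0 :=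
  Finset.mem_filter

lemma FF_eq_zero_of_not_nonempty (h : ¬(xiSupport I x).Nonempty) : FF I x = 0 :=
  dif_neg h

lemma FF_spec (h : (xiSupport I x).Nonempty) :
    0 < xiF I x (FF I x) ∧ (∃ i ∈ xiSupport I x, x i = FF I x) ∧
      ∀ j ∈ xiSupport I x, |x j| ≤ |FF I x| := by
  set M := (xiSupport I x).sup' h (|x ·|) with hM
  have hle : ∀ j ∈ xiSupport I x, |x j| ≤ M := fun j hj => Finset.le_sup' (|x ·|) hj
  have hξM : xiF I x M ≠ 0 := by
    obtain ⟨i, hi, hiM⟩ := Finset.exists_mem_eq_sup' h (|x ·|)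
    rw [← hM] at hiM
    rw [hiM, xiF_abs_ne_zero_iff]
    exact (mem_xiSupport.mp hi).2
  have hmem : ∀ {F : ℝ}, 0 < xiF I x F → ∃ i ∈ xiSupport I x, x i = F := fun hF => by
    obtain ⟨i, hi, hxi⟩ := exists_eq_of_xiF_pos hF
    exact ⟨i, mem_xiSupport.mpr ⟨hi, hxi ▸ hF.ne'⟩, hxi⟩
  obtain ⟨F, hFM, hξF, hFF⟩ : ∃ F, |F| = M ∧ 0 < xiF I x F ∧ FF I x = F := by
    have hFF : FF I x = if 0 < xiF I x M then (xiSupport I x).sup' h x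
        else if xiF I x M < 0 then (xiSupport I x).inf' h x else 0 :=
      dif_pos h
    rcases hξM.lt_or_gt with hneg | hpos
    · have hξ : 0 < xiF I x (-M) := by rw [xiF_neg]; omega
      obtain ⟨i, hi, hxi⟩ := hmem hξ
      refine ⟨-M, ?_, hξ, ?_⟩
      · rw [abs_neg, abs_of_nonneg ((abs_nonneg _).trans (hle i hi))]
      · rw [hFF, if_neg (by omega), if_pos hneg]
        exact le_antisymm (hxi ▸ Finset.inf'_le x hi)
          (Finset.le_inf' _ _ fun j hj => (abs_le.mp (hle j hj)).1)
    · obtain ⟨i, hi, hxi⟩ := hmem hpos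
      refine ⟨M, abs_of_nonneg ((abs_nonneg _).trans (hle i hi)), hpos, ?_⟩
      rw [hFF, if_pos hpos]
      exact le_antisymm (Finset.sup'_le _ _ fun j hj => (abs_le.mp (hle j hj)).2)
        (hxi ▸ Finset.le_sup' x hi)
  obtain ⟨i, hi, hxi⟩ := hmem hξF
  exact ⟨hFF ▸ hξF, ⟨i, hi, hFF ▸ hxi⟩, fun j hj => hFF ▸ hFM ▸ hle j hj⟩

lemma FF_ne_zero_iff : FF I x ≠ 0 ↔ (xiSupport I x).Nonempty := by
  refine ⟨fun h => by_contra fun hS => h (FF_eq_zero_of_not_nonempty hS), fun hS hF => ?_⟩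
  have := (FF_spec hS).1
  rw [hF, xiF_zero] at this
  exact this.false

lemma xiF_FF_pos (h : FF I x ≠ 0) : 0 < xiF I x (FF I x) :=
  (FF_spec (FF_ne_zero_iff.mp h)).1

lemma sum_odd_pow_eq_zero_of_FF_eq_zero (h : FF I x = 0) {k : ℕ} (hk : Odd k) :
    ∑ i ∈ I, x i ^ k = 0 := by
  have hS : xiSupport I x = ∅ :=
    Finset.not_nonempty_iff_eq_empty.mp fun hS => FF_ne_zero_iff.mpr hS h
  rw [sum_odd_pow_eq_sum_xiF_mul_pow I x hk]
  refine Finset.sum_eq_zero fun α hα => ?_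
  obtain ⟨i, hi, rfl⟩ := Finset.mem_image.mp hα
  have : xiF I x |x i| = 0 := by
    by_contra hne
    have : i ∈ xiSupport I x := mem_xiSupport.mpr ⟨hi, (xiF_abs_ne_zero_iff I x _).mp hne⟩
    simp [hS] at this
  simp [this]

lemma tendsto_sum_odd_pow_div_FF_pow (h : FF I x ≠ 0) :
    Tendsto (fun p : ℕ => (∑ i ∈ I, x i ^ (2 * p + 1)) / FF I x ^ (2 * p + 1)) atTop
      (𝓝 (xiF I x (FF I x))) := by
  obtain ⟨-, ⟨i, hi, hxi⟩, hle⟩ := FF_spec (FF_ne_zero_iff.mp h)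
  have hdom := tendsto_sum_mul_div_pow_of_dominant (T := I.image (|x ·|))
    (fun α => (xiF I x α : ℝ)) (M := |FF I x|)
    (Finset.mem_image.mpr ⟨i, (mem_xiSupport.mp hi).1, by rw [hxi]⟩)
    (abs_ne_zero.mpr h) (by
      intro α hα hξ hne
      obtain ⟨j, hj, rfl⟩ := Finset.mem_image.mp hα
      have hjS : j ∈ xiSupport I x :=
        mem_xiSupport.mpr ⟨hj, (xiF_abs_ne_zero_iff I x _).mp (by exact_mod_cast hξ)⟩
      rw [abs_abs, abs_abs]
      exact (hle j hjS).lt_of_ne hne)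
  have hlim := hdom.comp (tendsto_atTop_mono (fun p => show p ≤ 2 * p + 1 by omega) tendsto_id)
  have hsum : ∀ p : ℕ, (∑ i ∈ I, x i ^ (2 * p + 1)) / |FF I x| ^ (2 * p + 1) =
      ∑ α ∈ I.image (|x ·|), (xiF I x α : ℝ) * (α / |FF I x|) ^ (2 * p + 1) := fun p => by
    rw [sum_odd_pow_eq_sum_xiF_mul_pow I x ⟨p, rfl⟩, Finset.sum_div]
    exact Finset.sum_congr rfl fun α _ => by rw [div_pow, mul_div_assoc]
  rcases abs_choice (FF I x) with hF | hF <;> generalize |FF I x| = M at hF hlim hsum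
  · rw [← hF]
    simpa only [hsum, Function.comp_def] using hlim
  · rw [neg_eq_iff_eq_neg.mp hF.symm]
    simpa only [Odd.neg_pow ⟨_, rfl⟩, div_neg, xiF_neg, Int.cast_neg, hsum, Function.comp_def]
      using hlim.neg

end FF

section ratio

variable {ι : Type*} {I : Finset ι} {x : ι → ℝ}

lemma eventually_sum_odd_pow_ne_zero (h : FF I x ≠ 0) :
    ∀ᶠ p : ℕ in atTop, ∑ i ∈ I, x i ^ (2 * p + 1) ≠ 0 := by
  have hpos : (0 : ℝ) < xiF I x (FF I x) := mod_cast xiF_FF_pos h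
  filter_upwards [(tendsto_sum_odd_pow_div_FF_pow h).eventually (eventually_gt_nhds hpos)]
    with p hp h0
  rw [h0, zero_div] at hp
  exact hp.false

lemma tendsto_oddRoot_sum_odd_pow_div (hx : FF I x ≠ 0) (y : ι → ℝ) :
    Tendsto (fun p : ℕ => oddRoot p ((∑ i ∈ I, y i ^ (2 * p + 1)) / ∑ i ∈ I, x i ^ (2 * p + 1)))
      atTop (𝓝 (FF I y / FF I x)) := by
  by_cases hy : FF I y = 0
  · simp [sum_odd_pow_eq_zero_of_FF_eq_zero hy ⟨_, rfl⟩, oddRoot_zero, hy]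
  have hξ : ∀ {z : ι → ℝ}, FF I z ≠ 0 → (0 : ℝ) < xiF I z (FF I z) := fun hz =>
    mod_cast xiF_FF_pos hz
  set r : ℕ → ℝ := fun p => ((∑ i ∈ I, y i ^ (2 * p + 1)) / FF I y ^ (2 * p + 1)) /
    ((∑ i ∈ I, x i ^ (2 * p + 1)) / FF I x ^ (2 * p + 1))
  have hr : Tendsto r atTop (𝓝 (xiF I y (FF I y) / xiF I x (FF I x))) :=
    (tendsto_sum_odd_pow_div_FF_pow hy).div (tendsto_sum_odd_pow_div_FF_pow hx) (hξ hx).ne'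
  have hsplit : ∀ p : ℕ, (∑ i ∈ I, y i ^ (2 * p + 1)) / ∑ i ∈ I, x i ^ (2 * p + 1) =
      (FF I y / FF I x) ^ (2 * p + 1) * r p := fun p => by
    simp only [r]
    rw [div_pow]
    field_simp
  simp only [hsplit, oddRoot_mul, oddRoot_pow_self]
  simpa using (tendsto_oddRoot_of_tendsto_pos hr (div_pos (hξ hy) (hξ hx))).const_mul
    (FF I y / FF I x)

end ratio

section determinant

variable {n : ℕ}

lemma det_PhiM (p : ℕ) (B : Matrix (Fin n) (Fin n) ℝ) :
    (PhiM p B).det = ∑ σ : Equiv.Perm (Fin n),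
      (((Equiv.Perm.sign σ : ℤ) : ℝ) * ∏ i, B i (σ i)) ^ (2 * p + 1) := by
  rw [← Matrix.det_transpose, Matrix.det_apply']
  refine Finset.sum_congr rfl fun σ _ => ?_
  rw [mul_pow, ← Finset.prod_pow]
  rcases Int.units_eq_one_or (Equiv.Perm.sign σ) with h | h <;>
    simp [h, PhiM, Odd.neg_one_pow ⟨p, rfl⟩]

variable {A : Matrix (Fin n) (Fin n) ℝ}

lemma eventually_det_PhiM_ne_zero (hA : detInf A ≠ 0) :
    ∀ᶠ p : ℕ in atTop, (PhiM p A).det ≠ 0 := by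
  simpa only [det_PhiM] using eventually_sum_odd_pow_ne_zero hA

lemma tendsto_oddRoot_det_PhiM_div (hA : detInf A ≠ 0) (B : Matrix (Fin n) (Fin n) ℝ) :
    Tendsto (fun p : ℕ => oddRoot p ((PhiM p B).det / (PhiM p A).det)) atTop
      (𝓝 (detInf B / detInf A)) := by
  simp only [det_PhiM]
  exact tendsto_oddRoot_sum_odd_pow_div hA _

end determinant

theorem stmt_15 {n : ℕ} (A : Matrix (Fin n) (Fin n) ℝ) (b : Fin n → ℝ)
    (hA : detInf A ≠ 0) :
    (∃ p₀ : ℕ, ∀ p ≥ p₀,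
      (PhiM p A).det ≠ 0 ∧
      (PhiM p A).mulVec (phiV p (fun i =>
          oddRoot p ((PhiM p (A.updateCol i b)).det / (PhiM p A).det))) = phiV p b ∧
      ∀ y : Fin n → ℝ, (PhiM p A).mulVec (phiV p y) = phiV p b →
        y = fun i => oddRoot p ((PhiM p (A.updateCol i b)).det / (PhiM p A).det)) ∧
    ∀ i, Filter.Tendsto
      (fun p => oddRoot p ((PhiM p (A.updateCol i b)).det / (PhiM p A).det))
      Filter.atTop (nhds (detInf (A.updateCol i b) / detInf A)) := by
  obtain ⟨p₀, hp₀⟩ := eventually_atTop.mp (eventually_det_PhiM_ne_zero hA)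
  refine ⟨⟨p₀, fun p hp => ⟨hp₀ p hp, ?_, fun y => ?_⟩⟩,
    fun i => tendsto_oddRoot_det_PhiM_div hA _⟩
  · exact (PhiM_mulVec_phiV_eq_iff p (hp₀ p hp) b _).mpr rfl
  · exact (PhiM_mulVec_phiV_eq_iff p (hp₀ p hp) b y).mp
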